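/- arXiv:2510.08185 — 4 statements merged into one kernel-verified Lean document; each statement's English description precedes it below -/
import Mathlib

section
/- Let u and m be powers of two with m < u and set r = u·m. Then the Dietzfelbinger family H_{u,m} is pairwise independent: for all distinct x1, x2 ∈ {0,...,u−1} and all y1, y2 ∈ {0,...,m−1}, the number of pairs (a,b) ∈ {0,...,r−1}² with h_{a,b}(x1) = y1 and h_{a,b}(x2) = y2 equals r²/m². Equivalently, for a uniformly random (a,b), the probability that h_{a,b}(x1) = y1 and h_{a,b}(x2) = y2 is exactly 1/m². -/
/-!
Translating `b` by `u` adds one (mod `m`) to both hash values, so the fiber count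
`N(y₁, y₂)` of the map `(a, b) ↦ (h_{a,b}(x₁), h_{a,b}(x₂))` is invariant under
`(y₁, y₂) ↦ (y₁ + 1, y₂ + 1)`. Since `u`, `m` are powers of two and `0 < |x₁ - x₂| < u`,
`gcd(x₁ - x₂, u m)` divides `u`, so some `t` has `t (x₁ - x₂) ≡ u (mod u m)`; moving `(a, b)` by
`(t, -t x₂)` fixes `h(x₂)` and adds one to `h(x₁)`. Hence all `m²` fibers have the same size,
and they partition the `(u m)²` pairs `(a, b)`.
-/

open Finset

theorem Nat.add_mod_eq_add_mod_iff_of_lt {m a b : ℕ} (k : ℕ) (ha : a < m) (hb : b < m) :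
    (a + k) % m = (b + k) % m ↔ a = b :=
  ⟨fun h => (Nat.ModEq.add_right_cancel' k h).eq_of_lt_of_lt ha hb, fun h => h ▸ rfl⟩

theorem ZMod.exists_mul_eq_of_gcd_dvd {n c : ℕ} {d : ℤ} (h : d.gcd n ∣ c) :
    ∃ t : ZMod n, t * d = c := by
  obtain ⟨x, y, hxy⟩ := Int.gcd_dvd_iff.mp h
  refine ⟨x, ?_⟩
  have := congrArg (Int.cast : ℤ → ZMod n) hxy
  push_cast at this
  rw [this, ZMod.natCast_self]
  ring

theorem Nat.dvd_prime_pow_of_dvd_of_le {p a n i : ℕ} (hp : p.Prime) (ha : a ∣ p ^ n)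
    (hle : a ≤ p ^ i) : a ∣ p ^ i := by
  obtain ⟨k, -, rfl⟩ := (Nat.dvd_prime_pow hp).mp ha
  exact pow_dvd_pow p ((Nat.pow_le_pow_iff_right hp.one_lt).mp hle)

namespace Dietzfelbinger

def hash (u m : ℕ) (a b x : ZMod (u * m)) : ℕ := (a * x + b).val / u

def fiberCard (u m : ℕ) [NeZero u] [NeZero m] (x₁ x₂ : ZMod (u * m)) (y₁ y₂ : ℕ) : ℕ :=
  #{p : ZMod (u * m) × ZMod (u * m) | hash u m p.1 p.2 x₁ = y₁ ∧ hash u m p.1 p.2 x₂ = y₂}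

section

variable {u m : ℕ} [NeZero u] [NeZero m]

theorem hash_lt (a b x : ZMod (u * m)) : hash u m a b x < m :=
  Nat.div_lt_of_lt_mul (ZMod.val_lt _)

theorem val_add_mul_div (z : ZMod (u * m)) (k : ℕ) :
    (z + k * u).val / u = (z.val / u + k) % m := by
  rw [ZMod.val_add, ← Nat.cast_mul, ZMod.val_natCast, Nat.add_mod_mod,
    Nat.mod_mul_right_div_self, Nat.add_mul_div_right _ _ (NeZero.pos u)]

theorem hash_add_right (a b x : ZMod (u * m)) (k : ℕ) :
    hash u m a (b + k * u) x = (hash u m a b x + k) % m := by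
  rw [hash, ← add_assoc, val_add_mul_div, hash]

theorem hash_add_slope {t x₁ x₂ : ZMod (u * m)} (ht : t * (x₁ - x₂) = u)
    (a b : ZMod (u * m)) (k : ℕ) :
    hash u m (a + k * t) (b - k * t * x₂) x₁ = (hash u m a b x₁ + k) % m := by
  have : (a + k * t) * x₁ + (b - k * t * x₂) = a * x₁ + b + k * u := by
    rw [← ht]; ring
  rw [hash, this, val_add_mul_div, hash]

omit [NeZero u] [NeZero m] in
theorem hash_add_slope_same (t x₂ a b : ZMod (u * m)) (k : ℕ) :
    hash u m (a + k * t) (b - k * t * x₂) x₂ = hash u m a b x₂ := by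
  rw [hash, hash]; ring_nf

omit [NeZero u] [NeZero m] in
theorem hash_natCast (a b x : ℕ) : hash u m a b x = (a * x + b) % (u * m) / u := by
  rw [hash, ← ZMod.val_natCast]; push_cast; rfl

variable (x₁ x₂ : ZMod (u * m))

theorem fiberCard_add_mod {y₁ y₂ : ℕ} (k : ℕ) (hy₁ : y₁ < m) (hy₂ : y₂ < m) :
    fiberCard u m x₁ x₂ y₁ y₂ = fiberCard u m x₁ x₂ ((y₁ + k) % m) ((y₂ + k) % m) := by
  refine card_equiv ((Equiv.refl _).prodCongr (Equiv.addRight (k * u))) fun p => ?_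
  simp only [mem_filter_univ, Equiv.prodCongr_apply, Equiv.coe_refl, Equiv.coe_addRight,
    Prod.map_fst, Prod.map_snd, id, hash_add_right,
    Nat.add_mod_eq_add_mod_iff_of_lt k (hash_lt _ _ _) hy₁,
    Nat.add_mod_eq_add_mod_iff_of_lt k (hash_lt _ _ _) hy₂]

/-- Moving `(a, b)` by `(t, -t x₂)` fixes `a x₂ + b` and adds `u` to `a x₁ + b`. -/
theorem fiberCard_add_mod_left {t : ZMod (u * m)} (ht : t * (x₁ - x₂) = u) {y₁ : ℕ} (y₂ k : ℕ)
    (hy₁ : y₁ < m) :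
    fiberCard u m x₁ x₂ y₁ y₂ = fiberCard u m x₁ x₂ ((y₁ + k) % m) y₂ := by
  refine card_equiv (Equiv.addRight (k * t, -(k * t * x₂))) fun p => ?_
  simp only [mem_filter_univ, Equiv.coe_addRight, Prod.fst_add, Prod.snd_add, ← sub_eq_add_neg,
    hash_add_slope ht, hash_add_slope_same,
    Nat.add_mod_eq_add_mod_iff_of_lt k (hash_lt _ _ _) hy₁]

theorem fiberCard_eq_fiberCard_zero {t : ZMod (u * m)} (ht : t * (x₁ - x₂) = u) {y₁ y₂ : ℕ}
    (hy₁ : y₁ < m) (hy₂ : y₂ < m) :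
    fiberCard u m x₁ x₂ y₁ y₂ = fiberCard u m x₁ x₂ 0 0 := by
  have hm := NeZero.pos m
  calc fiberCard u m x₁ x₂ y₁ y₂
      = fiberCard u m x₁ x₂ ((y₂ + (y₁ + (m - y₂))) % m) y₂ := by
        rw [show y₂ + (y₁ + (m - y₂)) = y₁ + m by omega, Nat.add_mod_right, Nat.mod_eq_of_lt hy₁]
    _ = fiberCard u m x₁ x₂ y₂ y₂ := (fiberCard_add_mod_left x₁ x₂ ht y₂ _ hy₂).symm
    _ = fiberCard u m x₁ x₂ ((0 + y₂) % m) ((0 + y₂) % m) := by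
        rw [zero_add, Nat.mod_eq_of_lt hy₂]
    _ = fiberCard u m x₁ x₂ 0 0 := (fiberCard_add_mod x₁ x₂ y₂ hm hm).symm

theorem sum_fiberCard :
    ∑ y ∈ range m ×ˢ range m, fiberCard u m x₁ x₂ y.1 y.2 = (u * m) ^ 2 := by
  have := card_eq_sum_card_fiberwise (s := univ) (t := range m ×ˢ range m)
    (f := fun p : ZMod (u * m) × ZMod (u * m) => (hash u m p.1 p.2 x₁, hash u m p.1 p.2 x₂))
    fun p _ => mem_product.mpr ⟨mem_range.mpr (hash_lt _ _ _), mem_range.mpr (hash_lt _ _ _)⟩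
  simpa [fiberCard, Prod.ext_iff, sq] using this.symm

theorem fiberCard_mul_sq {t : ZMod (u * m)} (ht : t * (x₁ - x₂) = u) {y₁ y₂ : ℕ}
    (hy₁ : y₁ < m) (hy₂ : y₂ < m) :
    fiberCard u m x₁ x₂ y₁ y₂ * m ^ 2 = (u * m) ^ 2 := by
  rw [← sum_fiberCard x₁ x₂, sum_congr rfl fun y hy => fiberCard_eq_fiberCard_zero x₁ x₂ ht
    (mem_range.mp (mem_product.mp hy).1) (mem_range.mp (mem_product.mp hy).2),
    fiberCard_eq_fiberCard_zero x₁ x₂ ht hy₁ hy₂, sum_const, card_product, card_range, smul_eq_mul,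
    sq, mul_comm]

theorem card_filter_range_eq_fiberCard (x₁ x₂ y₁ y₂ : ℕ) :
    #{p ∈ range (u * m) ×ˢ range (u * m) | (p.1 * x₁ + p.2) % (u * m) / u = y₁ ∧
      (p.1 * x₂ + p.2) % (u * m) / u = y₂} = fiberCard u m x₁ x₂ y₁ y₂ := by
  simp only [← hash_natCast]
  refine card_nbij' (fun p => ((p.1 : ZMod (u * m)), (p.2 : ZMod (u * m))))
    (fun q => (q.1.val, q.2.val)) ?_ ?_ ?_ ?_
  · intro p hp
    simp_all
  · intro q hq
    simp_all [ZMod.val_lt]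
  · intro p hp
    simp_all [ZMod.val_natCast, Nat.mod_eq_of_lt]
  · intro q _
    simp

end

end Dietzfelbinger

theorem stmt_3_general (u m : ℕ) (hu : ∃ i, u = 2 ^ i) (hm : ∃ j, m = 2 ^ j)
    (x1 x2 : ℕ) (hx1 : x1 < u) (hx2 : x2 < u) (hne : x1 ≠ x2)
    (y1 y2 : ℕ) (hy1 : y1 < m) (hy2 : y2 < m) :
    (((Finset.range (u * m)) ×ˢ (Finset.range (u * m))).filter
      (fun p => ((p.1 * x1 + p.2) % (u * m)) / u = y1 ∧
                ((p.1 * x2 + p.2) % (u * m)) / u = y2)).card * m ^ 2 = (u * m) ^ 2 := by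
  obtain ⟨i, hui⟩ := hu
  obtain ⟨j, hmj⟩ := hm
  have : NeZero u := ⟨by simp [hui]⟩
  have : NeZero m := ⟨by simp [hmj]⟩
  set d : ℤ := x1 - x2
  have hd : d ≠ 0 := sub_ne_zero.mpr (Nat.cast_injective.ne hne)
  have hgcd : d.gcd ↑(u * m) ∣ u := by
    have hle : d.gcd ↑(u * m) ≤ u := (Int.gcd_le_natAbs_left _ hd).trans (by omega)
    rw [hui, hmj, ← pow_add] at hle ⊢
    exact Nat.dvd_prime_pow_of_dvd_of_le Nat.prime_two (Nat.gcd_dvd_right _ _) hle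
  obtain ⟨t, ht⟩ := ZMod.exists_mul_eq_of_gcd_dvd hgcd
  push_cast [d] at ht
  rw [Dietzfelbinger.card_filter_range_eq_fiberCard]
  exact Dietzfelbinger.fiberCard_mul_sq _ _ ht hy1 hy2

/-- Dietzfelbinger's family `h_{a,b}(x) = ⌊((a·x + b) mod (u·m)) / u⌋` with
`u, m` powers of two, `m < u`, is pairwise independent: for distinct
`x1 x2 < u` and any `y1 y2 < m`, exactly `(u·m)²/m²` of the `(u·m)²` pairs
`(a, b)` satisfy `h_{a,b}(x1) = y1` and `h_{a,b}(x2) = y2`. -/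
theorem stmt_3 (u m : ℕ) (hu : ∃ i, u = 2 ^ i) (hm : ∃ j, m = 2 ^ j) (hmu : m < u)
    (x1 x2 : ℕ) (hx1 : x1 < u) (hx2 : x2 < u) (hne : x1 ≠ x2)
    (y1 y2 : ℕ) (hy1 : y1 < m) (hy2 : y2 < m) :
    (((Finset.range (u * m)) ×ˢ (Finset.range (u * m))).filter
      (fun p => ((p.1 * x1 + p.2) % (u * m)) / u = y1 ∧
                ((p.1 * x2 + p.2) % (u * m)) / u = y2)).card * m ^ 2 = (u * m) ^ 2 :=
  stmt_3_general u m hu hm x1 x2 hx1 hx2 hne y1 y2 hy1 hy2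
end

section
/- Let u and m be powers of two with m < u and set r = u·m. Then for every real δ > 0, every nonempty set S ⊆ {0,...,u−1}, and every y ∈ {0,...,m−1}, the number of pairs (a,b) ∈ {0,...,r−1}² such that |{x ∈ S : h_{a,b}(x) = y}| ≥ (1+δ)·|S|/m is at most r²·m/(δ²·|S|). Equivalently, for a uniformly random (a,b), the probability that the load of bucket y on S is at least (1+δ)·|S|/m is at most m/(δ²·|S|). -/
/-!
Write `r = u * m`, `c = x' - x` for two distinct keys `x < x' < u`, and `c = 2 ^ s * t` with `t`
odd, so `2 ^ s < u`. Substituting `z = (a x + b) mod r` for `b` turns the pair of hash values into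
`(z / u, ((z + a c) mod r) / u)`. For fixed `z`, as `a` runs over `[0, r)` the residue
`(z + a c) mod r` runs `2 ^ s` times over the class of `z` modulo `2 ^ s`, which meets every bucket
in `u / 2 ^ s` points, so it lands in bucket `y` for exactly `u` values of `a`. Hence two distinct
keys share bucket `y` for exactly `u²` of the `r²` pairs `(a, b)`, while a single key lands there
for `u · r` of them. So the load of bucket `y` has mean `μ = |S| / m` and variance at most `μ`,
and Chebyshev's inequality gives the bound.
-/

open Finset

lemma card_filter_comp_eq_of_injOn {α : Type*} {s : Finset α} {f : α → α}
    (hmaps : Set.MapsTo f s s) (hinj : Set.InjOn f s) (P : α → Prop) [DecidablePred P] :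
    #{x ∈ s | P (f x)} = #{x ∈ s | P x} := by
  have hbij := (s.finite_toSet.injOn_iff_bijOn_of_mapsTo hmaps).1 hinj
  refine card_nbij f (fun x hx => ?_) (hinj.mono (coe_subset.2 (filter_subset _ _)))
    (fun x hx => ?_)
  · simp only [coe_filter, Set.mem_ofPred_eq] at hx ⊢
    exact ⟨hmaps hx.1, hx.2⟩
  · simp only [coe_filter, Set.mem_ofPred_eq] at hx
    obtain ⟨x', hx', rfl⟩ := hbij.surjOn hx.1
    exact ⟨x', by simpa using ⟨hx', hx.2⟩, rfl⟩

lemma card_filter_range_add_mul_mod {R t : ℕ} (ht : t.Coprime R) (e : ℕ) (P : ℕ → Prop)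
    [DecidablePred P] :
    #{k ∈ range R | P ((e + k * t) % R)} = #{k ∈ range R | P k} := by
  rcases R.eq_zero_or_pos with rfl | hR
  · simp
  refine card_filter_comp_eq_of_injOn (fun k _ => by simpa using Nat.mod_lt _ hR)
    (fun k hk k' hk' h => ?_) P
  have := Nat.ModEq.cancel_right_of_coprime ht.symm
    (Nat.ModEq.add_left_cancel' e (h : e + k * t ≡ e + k' * t [MOD R]))
  simp only [coe_range, Set.mem_Iio] at hk hk'
  rwa [Nat.ModEq, Nat.mod_eq_of_lt hk, Nat.mod_eq_of_lt hk'] at this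

lemma card_filter_range_mul_div_mod (q R : ℕ) (P : ℕ → ℕ → Prop) [∀ i k, Decidable (P i k)] :
    #{a ∈ range (q * R) | P (a / R) (a % R)} = #{p ∈ range q ×ˢ range R | P p.1 p.2} := by
  rcases R.eq_zero_or_pos with rfl | hR
  · simp
  refine card_nbij' (fun a => (a / R, a % R)) (fun p => p.1 * R + p.2) ?_ ?_ ?_ ?_
  · intro a ha
    simp only [coe_filter, mem_range, Set.mem_ofPred_eq, mem_product] at ha ⊢
    exact ⟨⟨Nat.div_lt_of_lt_mul (mul_comm q R ▸ ha.1), Nat.mod_lt _ hR⟩, ha.2⟩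
  · rintro ⟨i, k⟩ hp
    simp only [coe_filter, mem_range, Set.mem_ofPred_eq, mem_product] at hp ⊢
    obtain ⟨⟨hi, hk⟩, hP⟩ := hp
    refine ⟨by nlinarith, ?_⟩
    rwa [Nat.add_comm, Nat.add_mul_div_right _ _ hR, Nat.div_eq_of_lt hk, zero_add,
      Nat.add_mul_mod_self_right, Nat.mod_eq_of_lt hk]
  · intro a _
    exact Nat.div_add_mod' a R
  · rintro ⟨i, k⟩ hp
    simp only [coe_filter, mem_range, Set.mem_ofPred_eq, mem_product] at hp
    simp [Nat.add_comm, Nat.add_mul_div_right _ _ hR, Nat.div_eq_of_lt hp.1.2,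
      Nat.mod_eq_of_lt hp.1.2]

lemma card_filter_range_mul_mod (q R : ℕ) (P : ℕ → Prop) [DecidablePred P] :
    #{a ∈ range (q * R) | P (a % R)} = q * #{k ∈ range R | P k} := by
  rw [card_filter_range_mul_div_mod q R (fun _ k => P k), filter_product_right, card_product,
    card_range]

lemma card_filter_range_mul_div_eq {u m y : ℕ} (hy : y < m) :
    #{z ∈ range (u * m) | z / u = y} = u := by
  rw [mul_comm]
  refine (card_filter_range_mul_div_mod m u (fun i _ => i = y)).trans ?_
  rw [filter_product_left (· = y), card_product, filter_eq', if_pos (mem_range.2 hy)]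
  simp

lemma card_filter_range_add_mod {R : ℕ} (e : ℕ) (P : ℕ → Prop) [DecidablePred P] :
    #{k ∈ range R | P ((e + k) % R)} = #{k ∈ range R | P k} := by
  simpa using card_filter_range_add_mul_mod (Nat.coprime_one_left R) e P

lemma card_filter_product {α β : Type*} (s : Finset α) (t : Finset β) (P : α × β → Prop)
    [DecidablePred P] :
    #{p ∈ s ×ˢ t | P p} = ∑ a ∈ s, #{b ∈ t | P (a, b)} := by
  simp only [card_filter, sum_product]

lemma sum_card_filter_comm {α β : Type*} (s : Finset α) (t : Finset β) (r : α → β → Prop)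
    [∀ a b, Decidable (r a b)] :
    ∑ a ∈ s, #{b ∈ t | r a b} = ∑ b ∈ t, #{a ∈ s | r a b} :=
  sum_card_bipartiteAbove_eq_sum_card_bipartiteBelow r

lemma sum_card_filter_and {α β : Type*} (s : Finset α) (t : Finset β) (P : β → Prop)
    (Q : α → β → Prop) [DecidablePred P] [∀ a b, Decidable (Q a b)] :
    ∑ a ∈ s, #{b ∈ t | P b ∧ Q a b} = ∑ b ∈ t with P b, #{a ∈ s | Q a b} := by
  rw [sum_card_filter_comm, sum_filter]
  refine sum_congr rfl fun b _ => ?_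
  by_cases hb : P b <;> simp [hb]

lemma sum_card_filter_sq {ι α : Type*} (A : Finset ι) (S : Finset α) (P : ι → α → Prop)
    [∀ p x, Decidable (P p x)] :
    ∑ p ∈ A, #{x ∈ S | P p x} ^ 2 = ∑ x ∈ S, ∑ x' ∈ S, #{p ∈ A | P p x ∧ P p x'} := by
  have hsq : ∀ p ∈ A, #{x ∈ S | P p x} ^ 2 = #{q ∈ S ×ˢ S | P p q.1 ∧ P p q.2} := by
    intro p _
    rw [sq, ← card_product, filter_product]
  rw [sum_congr rfl hsq, ← sum_product' S S (fun x x' => #{p ∈ A | P p x ∧ P p x'})]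
  exact sum_card_filter_comm A (S ×ˢ S) (fun p q => P p q.1 ∧ P p q.2)

lemma card_filter_range_add_mul_mod_div_eq {g U m t y : ℕ} (hg : 0 < g) (ht : t.Coprime (U * m))
    (hy : y < m) (z : ℕ) :
    #{a ∈ range (g * U * m) | (z + a * (g * t)) % (g * U * m) / (g * U) = y} = g * U := by
  have hreduce : ∀ a, (z + a * (g * t)) % (g * U * m) / (g * U)
      = (z / g + a % (U * m) * t) % (U * m) / U := by
    intro a
    rw [← Nat.div_div_eq_div_mul, mul_assoc, Nat.mod_mul_right_div_self,
      show z + a * (g * t) = z + g * (a * t) by ring, Nat.add_mul_div_left _ _ hg,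
      ((Nat.mod_modEq a (U * m)).symm.mul_right t).add_left (z / g)]
  simp_rw [hreduce, mul_assoc g U m]
  rw [card_filter_range_mul_mod g (U * m) (fun k => (z / g + k * t) % (U * m) / U = y),
    card_filter_range_add_mul_mod ht (z / g) (· / U = y), card_filter_range_mul_div_eq hy]

def dietzHash (u m a b x : ℕ) : ℕ := (a * x + b) % (u * m) / u

lemma card_filter_dietzHash_eq {u m y : ℕ} (hy : y < m) (x : ℕ) :
    #{p ∈ range (u * m) ×ˢ range (u * m) | dietzHash u m p.1 p.2 x = y} = u * (u * m) := by
  rw [card_filter_product]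
  calc _ = ∑ _a ∈ range (u * m), u := sum_congr rfl fun a _ =>
        (card_filter_range_add_mod (a * x) (· / u = y)).trans (card_filter_range_mul_div_eq hy)
    _ = u * (u * m) := by simp [mul_comm]

lemma card_filter_dietzHash_eq_and_eq {i j y x x' : ℕ} (hy : y < 2 ^ j) (hxx' : x < x')
    (hx' : x' < 2 ^ i) :
    #{p ∈ range (2 ^ i * 2 ^ j) ×ˢ range (2 ^ i * 2 ^ j) |
      dietzHash (2 ^ i) (2 ^ j) p.1 p.2 x = y ∧ dietzHash (2 ^ i) (2 ^ j) p.1 p.2 x' = y}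
      = (2 ^ i) ^ 2 := by
  obtain ⟨c, rfl⟩ := Nat.exists_eq_add_of_lt hxx'
  obtain ⟨s, t, ht, hc⟩ := Nat.exists_eq_two_pow_mul_odd (Nat.add_one_ne_zero c)
  have hsi : s ≤ i := by
    have : 2 ^ s ≤ 2 ^ i := by
      have := Nat.le_mul_of_pos_right (2 ^ s) ht.pos
      omega
    exact (Nat.pow_le_pow_iff_right (by norm_num)).1 this
  have hu : 2 ^ i = 2 ^ s * 2 ^ (i - s) := by rw [← pow_add, Nat.add_sub_cancel' hsi]
  have htU : t.Coprime (2 ^ (i - s) * 2 ^ j) := by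
    rw [← pow_add]; exact Nat.Coprime.pow_right _ (Nat.coprime_two_right.2 ht)
  set g := 2 ^ s
  set U := 2 ^ (i - s)
  set m := 2 ^ j
  have hshift : ∀ a b, (a * (x + c + 1) + b) % (g * U * m)
      = ((a * x + b) % (g * U * m) + a * (g * t)) % (g * U * m) := by
    intro a b
    rw [Nat.mod_add_mod, ← hc]; ring_nf
  simp only [dietzHash, hu, hshift, card_filter_product]
  calc _ = ∑ a ∈ range (g * U * m), #{z ∈ range (g * U * m) |
          z / (g * U) = y ∧ (z + a * (g * t)) % (g * U * m) / (g * U) = y} :=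
        sum_congr rfl fun a _ => card_filter_range_add_mod (a * x)
          (fun z => z / (g * U) = y ∧ (z + a * (g * t)) % (g * U * m) / (g * U) = y)
    _ = ∑ z ∈ range (g * U * m) with z / (g * U) = y, g * U := by
        rw [sum_card_filter_and]
        exact sum_congr rfl fun z _ =>
          card_filter_range_add_mul_mod_div_eq (Nat.two_pow_pos s) htU hy z
    _ = (g * U) ^ 2 := by
        rw [sum_const, card_filter_range_mul_div_eq hy, smul_eq_mul, sq]

lemma sum_card_filter_dietzHash_eq {u m y : ℕ} (hy : y < m) (S : Finset ℕ) :
    ∑ p ∈ range (u * m) ×ˢ range (u * m), #{x ∈ S | dietzHash u m p.1 p.2 x = y}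
      = #S * (u * (u * m)) := by
  rw [sum_card_filter_comm, sum_congr rfl fun x _ => card_filter_dietzHash_eq hy x, sum_const,
    smul_eq_mul]

lemma sum_card_filter_dietzHash_eq_sq_le {i j y : ℕ} (hy : y < 2 ^ j) {S : Finset ℕ}
    (hS : ∀ x ∈ S, x < 2 ^ i) :
    ∑ p ∈ range (2 ^ i * 2 ^ j) ×ˢ range (2 ^ i * 2 ^ j),
        #{x ∈ S | dietzHash (2 ^ i) (2 ^ j) p.1 p.2 x = y} ^ 2
      ≤ #S * (2 ^ i * (2 ^ i * 2 ^ j)) + #S ^ 2 * (2 ^ i) ^ 2 := by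
  set A := range (2 ^ i * 2 ^ j) ×ˢ range (2 ^ i * 2 ^ j)
  have hpair : ∀ x ∈ S, ∀ x' ∈ S,
      #{p ∈ A | dietzHash (2 ^ i) (2 ^ j) p.1 p.2 x = y ∧ dietzHash (2 ^ i) (2 ^ j) p.1 p.2 x' = y}
        ≤ (if x = x' then 2 ^ i * (2 ^ i * 2 ^ j) else 0) + (2 ^ i) ^ 2 := by
    intro x hx x' hx'
    rcases lt_trichotomy x x' with h | rfl | h
    · rw [card_filter_dietzHash_eq_and_eq hy h (hS x' hx'), if_neg h.ne]; omega
    · simp only [and_self, if_pos]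
      exact (card_filter_dietzHash_eq hy x).le.trans (Nat.le_add_right _ _)
    · simp only [and_comm (a := dietzHash _ _ _ _ x = y)]
      rw [card_filter_dietzHash_eq_and_eq hy h (hS x hx), if_neg h.ne']; omega
  rw [sum_card_filter_sq]
  calc _ ≤ ∑ x ∈ S, ∑ x' ∈ S, ((if x = x' then 2 ^ i * (2 ^ i * 2 ^ j) else 0) + (2 ^ i) ^ 2) :=
        sum_le_sum fun x hx => sum_le_sum fun x' hx' => hpair x hx x' hx'
    _ = #S * (2 ^ i * (2 ^ i * 2 ^ j)) + #S ^ 2 * (2 ^ i) ^ 2 := by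
        simp only [sum_add_distrib, sum_ite_eq, sum_const, smul_eq_mul, sum_ite_mem, inter_self]
        ring

lemma card_filter_add_le_le_div_sq {ι : Type*} (A : Finset ι) (f : ι → ℝ) {μ t V : ℝ}
    (ht : 0 < t) (h₁ : ∑ p ∈ A, f p = #A * μ) (h₂ : ∑ p ∈ A, f p ^ 2 ≤ #A * μ ^ 2 + V) :
    (#{p ∈ A | μ + t ≤ f p} : ℝ) ≤ V / t ^ 2 := by
  have hvar : ∑ p ∈ A, (f p - μ) ^ 2 = ∑ p ∈ A, f p ^ 2 - #A * μ ^ 2 := by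
    simp only [sub_sq, sum_add_distrib, sum_sub_distrib, ← sum_mul, ← mul_sum, h₁, sum_const,
      nsmul_eq_mul]
    ring
  rw [le_div_iff₀ (by positivity)]
  calc (#{p ∈ A | μ + t ≤ f p} : ℝ) * t ^ 2 = ∑ p ∈ A with μ + t ≤ f p, t ^ 2 := by
        rw [sum_const, nsmul_eq_mul]
    _ ≤ ∑ p ∈ A with μ + t ≤ f p, (f p - μ) ^ 2 := by
        refine sum_le_sum fun p hp => ?_
        have := (mem_filter.1 hp).2
        nlinarith
    _ ≤ ∑ p ∈ A, (f p - μ) ^ 2 :=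
        sum_le_sum_of_subset_of_nonneg (filter_subset _ _) fun _ _ _ => sq_nonneg _
    _ ≤ V := by linarith

theorem stmt_4_general (u m : ℕ) (hu : ∃ i, u = 2 ^ i) (hm : ∃ j, m = 2 ^ j)
    (δ : ℝ) (hδ : 0 < δ) (S : Finset ℕ) (hSu : ∀ x ∈ S, x < u) (hS : S.Nonempty)
    (y : ℕ) (hy : y < m) :
    ((((Finset.range (u * m)) ×ˢ (Finset.range (u * m))).filter
      (fun p => (1 + δ) * S.card / m ≤
        ((S.filter (fun x => ((p.1 * x + p.2) % (u * m)) / u = y)).card : ℝ))).card : ℝ)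
      ≤ ((u * m) ^ 2 : ℕ) * m / (δ ^ 2 * S.card) := by
  obtain ⟨i, rfl⟩ := hu
  obtain ⟨j, rfl⟩ := hm
  set A := range (2 ^ i * 2 ^ j) ×ˢ range (2 ^ i * 2 ^ j)
  set F : ℕ × ℕ → ℝ := fun p => #{x ∈ S | dietzHash (2 ^ i) (2 ^ j) p.1 p.2 x = y}
  have hn : (0 : ℝ) < #S := by exact_mod_cast hS.card_pos
  have hA : (#A : ℝ) = (2 ^ i * 2 ^ j) ^ 2 := by simp [A, sq]
  have h₁ : ∑ p ∈ A, F p = #A * (#S / 2 ^ j) := by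
    have := congrArg (Nat.cast (R := ℝ)) (sum_card_filter_dietzHash_eq (u := 2 ^ i) hy S)
    push_cast at this
    rw [this, hA]
    field_simp
  have h₂ : ∑ p ∈ A, F p ^ 2 ≤ #A * (#S / 2 ^ j) ^ 2 + #S * (2 ^ i * (2 ^ i * 2 ^ j)) := by
    have := (Nat.cast_le (α := ℝ)).2 (sum_card_filter_dietzHash_eq_sq_le hy hSu)
    push_cast at this
    rw [hA]
    field_simp
    linarith
  have key := card_filter_add_le_le_div_sq A F (t := δ * #S / 2 ^ j) (by positivity) h₁ h₂
  rw [show (1 + δ) * #S / ((2 ^ j : ℕ) : ℝ) = #S / 2 ^ j + δ * #S / 2 ^ j by push_cast; ring]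
  refine key.trans_eq ?_
  push_cast
  field_simp

/-- Chebyshev load bound for the Dietzfelbinger family: for `δ > 0`, a nonempty
`S ⊆ {0,…,u−1}` and a bucket `y < m`, the fraction of pairs `(a,b)` for which
bucket `y` receives at least `(1+δ)·|S|/m` elements of `S` is at most
`m/(δ²·|S|)`. -/
theorem stmt_4 (u m : ℕ) (hu : ∃ i, u = 2 ^ i) (hm : ∃ j, m = 2 ^ j) (hmu : m < u)
    (δ : ℝ) (hδ : 0 < δ) (S : Finset ℕ) (hSu : ∀ x ∈ S, x < u) (hS : S.Nonempty)
    (y : ℕ) (hy : y < m) :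
    ((((Finset.range (u * m)) ×ˢ (Finset.range (u * m))).filter
      (fun p => (1 + δ) * S.card / m ≤
        ((S.filter (fun x => ((p.1 * x + p.2) % (u * m)) / u = y)).card : ℝ))).card : ℝ)
      ≤ ((u * m) ^ 2 : ℕ) * m / (δ ^ 2 * S.card) :=
  stmt_4_general u m hu hm δ hδ S hSu hS y hy
end

section
/- Let u and m be powers of two with m < u, set r = u·m, and let k be a positive integer. Then for every set S ⊆ {0,...,u−1} with k²·|S|² ≤ m, the number of pairs (a,b) ∈ {0,...,r−1}² for which there exists y ∈ {0,...,m−1} such that |S ∩ (⋃_{j=0}^{k−1} h_{a,b}^{-1}((y+j) mod m))| > 1 is at most r²/2. Equivalently, with probability at least 1/2 over a uniformly random (a,b), no two distinct elements of S are mapped by h_{a,b} into a common cyclic window {y, y+1 mod m, ..., y+k−1 mod m} of length k. -/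
/-!
Fix `x' < x` in `S`. As `u` and `m` are powers of two and `0 < x - x' < u`, `gcd (x - x') (u m)`
divides `u`, so `d (x - x') ≡ u (mod u m)` for some `d`. The translation
`(a, b) ↦ (a + d, b - d x')` then fixes `a x' + b` and adds `u` to `a x + b`, so it raises
`h(x) - h(x') ∈ ℤ/m` by exactly one. Hence this difference is equidistributed over the pairs
`(a, b)`, and it lies among the `2k - 1` differences possible inside one window with probability
at most `(2k - 1)/m`. A union bound over the fewer than `|S|²/2` pairs `x' < x` bounds the
probability of a collision by `|S|² (2k - 1) / (2m) ≤ k² |S|² / (2m) ≤ 1/2`.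
-/

open Finset

theorem natCast_dietzHash (u m a b x : ℕ) :
    (dietzHash u m a b x : ZMod m) = ((a * x + b) / u : ℕ) := by
  rw [dietzHash, Nat.mod_mul_right_div_self, ZMod.natCast_mod]

theorem natCast_div_eq_of_modEq {u m n n' : ℕ} (h : n ≡ n' [MOD u * m]) :
    ((n / u : ℕ) : ZMod m) = (n' / u : ℕ) := by
  rw [← ZMod.natCast_mod (n / u), ← Nat.mod_mul_right_div_self, h, Nat.mod_mul_right_div_self,
    ZMod.natCast_mod]

section Equidistribution

variable {α : Type*} {m : ℕ} [NeZero m] {s : Finset α} {f : α → ZMod m} {τ : α → α}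

theorem mul_card_fiber_le_of_shift (hτs : Set.MapsTo τ s s) (hτ : Set.InjOn τ s)
    (hf : ∀ a ∈ s, f (τ a) = f a + 1) (q : ZMod m) : m * #{a ∈ s | f a = q} ≤ #s := by
  have step (q : ZMod m) : #{a ∈ s | f a = q} ≤ #{a ∈ s | f a = q + 1} := by
    refine card_le_card_of_injOn τ (fun a ha => ?_) (hτ.mono fun a ha => (mem_filter.1 ha).1)
    obtain ⟨has, rfl⟩ := mem_filter.1 ha
    exact mem_filter.2 ⟨hτs has, hf a has⟩
  have iter (j : ℕ) : #{a ∈ s | f a = q} ≤ #{a ∈ s | f a = q + j} := by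
    induction j with
    | zero => simp
    | succ j ih => simpa [add_assoc] using ih.trans (step (q + j))
  calc m * #{a ∈ s | f a = q} = ∑ _j : ZMod m, #{a ∈ s | f a = q} := by simp
    _ ≤ ∑ j : ZMod m, #{a ∈ s | f a = q + j} :=
      sum_le_sum fun j _ => by simpa using iter j.val
    _ = ∑ j : ZMod m, #{a ∈ s | f a = j} :=
      Equiv.sum_comp (Equiv.addLeft q) fun j => #{a ∈ s | f a = j}
    _ = #s := (card_eq_sum_card_fiberwise fun _ _ => mem_univ _).symm

theorem mul_card_preimage_le_of_shift (hτs : Set.MapsTo τ s s) (hτ : Set.InjOn τ s)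
    (hf : ∀ a ∈ s, f (τ a) = f a + 1) (W : Finset (ZMod m)) :
    m * #{a ∈ s | f a ∈ W} ≤ #W * #s := by
  rw [card_eq_sum_card_fiberwise (s := {a ∈ s | f a ∈ W}) (t := W) (f := f)
    fun a ha => (mem_filter.1 ha).2, mul_sum]
  calc ∑ q ∈ W, m * #{a ∈ {a ∈ s | f a ∈ W} | f a = q}
      ≤ ∑ _q ∈ W, #s := sum_le_sum fun q _ =>
        (Nat.mul_le_mul_left m (card_le_card (filter_subset_filter _ (filter_subset _ _)))).trans
          (mul_card_fiber_le_of_shift hτs hτ hf q)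
    _ = #W * #s := by rw [sum_const, smul_eq_mul]

end Equidistribution

theorem injOn_add_mod (d r : ℕ) : Set.InjOn (fun a => (a + d) % r) (range r) :=
  fun _ ha _ ha' h => (Nat.ModEq.add_right_cancel' d h).eq_of_lt_of_lt
    (mem_range.1 ha) (mem_range.1 ha')

theorem mapsTo_add_mod {r : ℕ} (hr : 0 < r) (d : ℕ) :
    Set.MapsTo (fun a => (a + d) % r) (range r) (range r) :=
  fun _ _ => mem_range.2 (Nat.mod_lt _ hr)

theorem mul_card_dietzHash_sub_mem_le {u m x x' d : ℕ} [NeZero m] (hu : 0 < u)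
    (hd : d * x ≡ d * x' + u [MOD u * m]) (W : Finset (ZMod m)) :
    m * #{p ∈ range (u * m) ×ˢ range (u * m) |
      (dietzHash u m p.1 p.2 x : ZMod m) - dietzHash u m p.1 p.2 x' ∈ W} ≤ #W * (u * m) ^ 2 := by
  set r := u * m
  have hr : 0 < r := Nat.mul_pos hu (Nat.pos_of_neZero m)
  set e := r - d * x' % r
  have he : d * x' + e ≡ 0 [MOD r] := by
    rw [← ZMod.natCast_eq_natCast_iff]
    have : d * x' % r ≤ r := (Nat.mod_lt _ hr).le
    simp [e, Nat.cast_sub this]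
  have hτ (p : ℕ × ℕ) :
      (p.1 + d) % r * x + (p.2 + e) % r ≡ p.1 * x + p.2 + u [MOD r] ∧
      (p.1 + d) % r * x' + (p.2 + e) % r ≡ p.1 * x' + p.2 [MOD r] := by
    simp only [← ZMod.natCast_eq_natCast_iff] at hd he ⊢
    push_cast [ZMod.natCast_mod] at hd he ⊢
    exact ⟨by linear_combination hd + he, by linear_combination he⟩
  have key := mul_card_preimage_le_of_shift (s := range r ×ˢ range r)
    (f := fun p => (dietzHash u m p.1 p.2 x : ZMod m) - (dietzHash u m p.1 p.2 x' : ZMod m))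
    (τ := fun p => ((p.1 + d) % r, (p.2 + e) % r))
    (by simpa only [coe_product] using (mapsTo_add_mod hr d).prodMap (mapsTo_add_mod hr e))
    (by simpa only [coe_product] using (injOn_add_mod d r).prodMap (injOn_add_mod e r))
    (fun p _ => by
      simp only [natCast_dietzHash]
      rw [natCast_div_eq_of_modEq (hτ p).1, natCast_div_eq_of_modEq (hτ p).2,
        Nat.add_div_right _ hu]
      push_cast
      ring)
    W
  rwa [card_product, card_range, ← sq] at key

theorem exists_mul_modEq_of_gcd_dvd {z n c : ℕ} (hlt : Nat.gcd z n < n) (h : Nat.gcd z n ∣ c) :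
    ∃ d, d * z ≡ c [MOD n] := by
  obtain ⟨d, -, hd⟩ := Nat.exists_mul_mod_eq_gcd hlt
  obtain ⟨t, rfl⟩ := h
  have hd' : z * d ≡ Nat.gcd z n [MOD n] := by rw [Nat.ModEq, hd, Nat.mod_eq_of_lt hlt]
  exact ⟨d * t, by simpa only [mul_right_comm d t z, mul_comm _ z] using hd'.mul_right t⟩

theorem gcd_dvd_two_pow_of_lt {z i n : ℕ} (hz : 0 < z) (hzi : z < 2 ^ i) :
    Nat.gcd z (2 ^ n) ∣ 2 ^ i := by
  obtain ⟨e, -, he⟩ := (Nat.dvd_prime_pow Nat.prime_two).1 (Nat.gcd_dvd_right z (2 ^ n))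
  have hez : 2 ^ e ≤ z := he ▸ Nat.le_of_dvd hz (Nat.gcd_dvd_left z _)
  rw [he]
  exact Nat.pow_dvd_pow 2 ((Nat.pow_lt_pow_iff_right (by norm_num)).1 (hez.trans_lt hzi)).le

theorem exists_mul_modEq_mul_add_two_pow {i j x x' : ℕ} (hx : x < 2 ^ i) (hx' : x' < x) :
    ∃ d, d * x ≡ d * x' + 2 ^ i [MOD 2 ^ i * 2 ^ j] := by
  have hg := gcd_dvd_two_pow_of_lt (n := i + j) (Nat.sub_pos_of_lt hx') ((x.sub_le x').trans_lt hx)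
  have hlt : Nat.gcd (x - x') (2 ^ (i + j)) < 2 ^ (i + j) :=
    ((Nat.gcd_le_left _ (Nat.sub_pos_of_lt hx')).trans_lt ((x.sub_le x').trans_lt hx)).trans_le
      (Nat.pow_le_pow_right (by norm_num) (Nat.le_add_right i j))
  obtain ⟨d, hd⟩ := exists_mul_modEq_of_gcd_dvd hlt hg
  refine ⟨d, ?_⟩
  rw [← pow_add, ← Nat.add_sub_cancel' hx'.le, mul_add]
  exact hd.add_left _

noncomputable def windowDiffs (m k : ℕ) : Finset (ZMod m) :=
  (range k).image (fun j : ℕ => (j : ZMod m)) ∪ (range k).image (fun j : ℕ => -(j : ZMod m))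

theorem card_windowDiffs_le {m k : ℕ} (hk : 0 < k) : #(windowDiffs m k) ≤ 2 * k - 1 := by
  set A := (range k).image (fun j : ℕ => (j : ZMod m))
  set B := (range k).image (fun j : ℕ => -(j : ZMod m))
  have hA : #A ≤ k := card_range k ▸ card_image_le
  have hB : #B ≤ k := card_range k ▸ card_image_le
  have h0 : 0 < #(A ∩ B) := card_pos.2 ⟨0, mem_inter.2
    ⟨mem_image.2 ⟨0, mem_range.2 hk, Nat.cast_zero⟩, mem_image.2 ⟨0, mem_range.2 hk, by simp⟩⟩⟩
  have := card_union_add_card_inter A B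
  change #(A ∪ B) ≤ _
  omega

theorem natCast_sub_mem_windowDiffs {m k y h h' j j' : ℕ} (hj : j < k) (hj' : j' < k)
    (e : h = (y + j) % m) (e' : h' = (y + j') % m) : (h : ZMod m) - h' ∈ windowDiffs m k := by
  have : (h : ZMod m) - h' = j - j' := by subst e e'; push_cast [ZMod.natCast_mod]; ring
  rw [this, windowDiffs, mem_union, mem_image, mem_image]
  rcases le_total j' j with hle | hle
  · exact Or.inl ⟨j - j', mem_range.2 (by omega), by push_cast [hle]; ring⟩
  · exact Or.inr ⟨j' - j, mem_range.2 (by omega), by push_cast [hle]; ring⟩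

theorem two_mul_card_filter_snd_lt_fst_le {α : Type*} [LinearOrder α] (S : Finset α) :
    2 * #{p ∈ S ×ˢ S | p.2 < p.1} ≤ #S ^ 2 := by
  have hswap : #{p ∈ S ×ˢ S | p.2 < p.1} ≤ #{p ∈ S ×ˢ S | ¬ p.2 < p.1} := by
    refine card_le_card_of_injOn Prod.swap (fun p hp => ?_) Prod.swap_injective.injOn
    simp only [coe_filter, Set.mem_ofPred_eq, mem_product, Prod.fst_swap, Prod.snd_swap,
      not_lt] at hp ⊢
    exact ⟨hp.1.symm, hp.2.le⟩
  have := card_filter_add_card_filter_not (s := S ×ˢ S) fun p : α × α => p.2 < p.1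
  rw [card_product] at this
  rw [sq]
  omega

theorem mul_card_windowCollision_mul_two_le {u m k : ℕ} [NeZero m] (hu : 0 < u) (hk : 0 < k)
    (S : Finset ℕ) (hshift : ∀ x ∈ S, ∀ x' ∈ S, x' < x → ∃ d, d * x ≡ d * x' + u [MOD u * m]) :
    m * (#{p ∈ range (u * m) ×ˢ range (u * m) | ∃ y < m,
      1 < #{x ∈ S | ∃ j < k, dietzHash u m p.1 p.2 x = (y + j) % m}} * 2) ≤
      #S ^ 2 * (2 * k - 1) * (u * m) ^ 2 := by
  set P := {x ∈ S ×ˢ S | x.2 < x.1}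
  set close : ℕ × ℕ → Finset (ℕ × ℕ) := fun x => {p ∈ range (u * m) ×ˢ range (u * m) |
    (dietzHash u m p.1 p.2 x.1 : ZMod m) - dietzHash u m p.1 p.2 x.2 ∈ windowDiffs m k}
  have hsub : {p ∈ range (u * m) ×ˢ range (u * m) | ∃ y < m,
      1 < #{x ∈ S | ∃ j < k, dietzHash u m p.1 p.2 x = (y + j) % m}} ⊆ P.biUnion close := by
    intro p hp
    obtain ⟨hp, y, -, hy⟩ := mem_filter.1 hp
    obtain ⟨x₁, hx₁, x₂, hx₂, hne⟩ := one_lt_card.1 hy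
    obtain ⟨hx₁, j₁, hj₁, h₁⟩ := mem_filter.1 hx₁
    obtain ⟨hx₂, j₂, hj₂, h₂⟩ := mem_filter.1 hx₂
    simp only [mem_biUnion, mem_filter, P, close]
    rcases hne.lt_or_gt with h | h
    · exact ⟨(x₂, x₁), ⟨mem_product.2 ⟨hx₂, hx₁⟩, h⟩, hp, natCast_sub_mem_windowDiffs hj₂ hj₁ h₂ h₁⟩
    · exact ⟨(x₁, x₂), ⟨mem_product.2 ⟨hx₁, hx₂⟩, h⟩, hp, natCast_sub_mem_windowDiffs hj₁ hj₂ h₁ h₂⟩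
  have hclose : ∀ x ∈ P, m * #(close x) ≤ (2 * k - 1) * (u * m) ^ 2 := fun x hx => by
    obtain ⟨⟨hx₁, hx₂⟩, hlt⟩ := mem_filter.1 hx |>.imp_left mem_product.1
    obtain ⟨d, hd⟩ := hshift x.1 hx₁ x.2 hx₂ hlt
    exact (mul_card_dietzHash_sub_mem_le hu hd _).trans
      (Nat.mul_le_mul_right _ (card_windowDiffs_le hk))
  calc m * (#_ * 2) ≤ (∑ x ∈ P, m * #(close x)) * 2 := by
        rw [← mul_assoc, ← mul_sum]; gcongr; exact (card_le_card hsub).trans card_biUnion_le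
    _ ≤ #P * ((2 * k - 1) * (u * m) ^ 2) * 2 := by
        gcongr; simpa using sum_le_sum hclose
    _ = 2 * #P * (2 * k - 1) * (u * m) ^ 2 := by ring
    _ ≤ #S ^ 2 * (2 * k - 1) * (u * m) ^ 2 := by
        gcongr; exact two_mul_card_filter_snd_lt_fst_le S

theorem stmt_5_general (u m k : ℕ) (hu : ∃ i, u = 2 ^ i) (hm : ∃ j, m = 2 ^ j)
    (hk : 0 < k) (S : Finset ℕ) (hSu : ∀ x ∈ S, x < u) (hS : k ^ 2 * S.card ^ 2 ≤ m) :
    (((Finset.range (u * m)) ×ˢ (Finset.range (u * m))).filter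
      (fun p => ∃ y < m, 1 < (S.filter (fun x => ∃ j < k,
        ((p.1 * x + p.2) % (u * m)) / u = (y + j) % m)).card)).card * 2 ≤ (u * m) ^ 2 := by
  obtain ⟨i, rfl⟩ := hu
  obtain ⟨j, rfl⟩ := hm
  have hbound := mul_card_windowCollision_mul_two_le (m := 2 ^ j) (Nat.two_pow_pos i) hk S
    fun x hx x' _ hx' => exists_mul_modEq_mul_add_two_pow (hSu x hx) hx'
  have hk2 : 2 * k - 1 ≤ k ^ 2 :=
    Nat.sub_le_iff_le_add.2 (by nlinarith [Nat.mul_le_mul hk hk])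
  refine Nat.le_of_mul_le_mul_left (hbound.trans ?_) (Nat.two_pow_pos j)
  calc #S ^ 2 * (2 * k - 1) * (2 ^ i * 2 ^ j) ^ 2
    _ ≤ k ^ 2 * #S ^ 2 * (2 ^ i * 2 ^ j) ^ 2 := by rw [mul_comm (k ^ 2)]; gcongr
    _ ≤ 2 ^ j * (2 ^ i * 2 ^ j) ^ 2 := by gcongr

/-- Window collision-freeness for the Dietzfelbinger family: if
`k²·|S|² ≤ m`, then for at least half of the pairs `(a,b)` no two distinct
elements of `S` land in a common cyclic window of length `k` modulo `m`. -/
theorem stmt_5 (u m k : ℕ) (hu : ∃ i, u = 2 ^ i) (hm : ∃ j, m = 2 ^ j) (hmu : m < u)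
    (hk : 0 < k) (S : Finset ℕ) (hSu : ∀ x ∈ S, x < u) (hS : k ^ 2 * S.card ^ 2 ≤ m) :
    (((Finset.range (u * m)) ×ˢ (Finset.range (u * m))).filter
      (fun p => ∃ y < m, 1 < (S.filter (fun x => ∃ j < k,
        ((p.1 * x + p.2) % (u * m)) / u = (y + j) % m)).card)).card * 2 ≤ (u * m) ^ 2 :=
  stmt_5_general u m k hu hm hk S hSu hS
end

section
/- Let u and m be positive integers and set r = u·m. For all natural numbers a, x1, x2, there exists κ ∈ {0,1} such that ⌊((a·(x1+x2)) mod r)/u⌋ ≡ ⌊((a·x1) mod r)/u⌋ + ⌊((a·x2) mod r)/u⌋ + κ (mod m). In other words, the offset-free hash function ĥ(x) = ⌊((a·x) mod r)/u⌋ is almost linear modulo m: ĥ(x1+x2) differs from ĥ(x1)+ĥ(x2) modulo m by an additive error κ ∈ {0,1}. -/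
/-!
Since `u ∣ u·m`, reducing modulo `u·m` before dividing by `u` is the same as reducing the
quotient modulo `m`: `ĥ(x) = ⌊a·x / u⌋ mod m`. So the claim reduces to the exact identity
`⌊(A + B)/u⌋ = ⌊A/u⌋ + ⌊B/u⌋ + κ`, where `κ ∈ {0, 1}` is the carry of the remainders.
-/

theorem Nat.exists_le_one_add_div_eq (a b c : ℕ) :
    ∃ κ ≤ 1, (a + b) / c = a / c + b / c + κ := by
  rcases c.eq_zero_or_pos with rfl | hc
  · exact ⟨0, zero_le_one, by simp⟩
  · rw [Nat.add_div hc]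
    split_ifs <;> exact ⟨_, by norm_num, rfl⟩

theorem stmt_6_general (u m : ℕ) (a x1 x2 : ℕ) :
    ∃ κ ≤ 1, Nat.ModEq m ((a * (x1 + x2)) % (u * m) / u)
      ((a * x1) % (u * m) / u + (a * x2) % (u * m) / u + κ) := by
  obtain ⟨κ, hκ, hcarry⟩ := Nat.exists_le_one_add_div_eq (a * x1) (a * x2) u
  refine ⟨κ, hκ, ?_⟩
  simp only [Nat.mod_mul_right_div_self, Nat.mul_add, hcarry]
  exact (Nat.mod_modEq _ m).trans
    (((Nat.mod_modEq _ m).symm.add (Nat.mod_modEq _ m).symm).add_right κ)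

/-- The offset-free Dietzfelbinger hash `ĥ(x) = ⌊((a·x) mod (u·m)) / u⌋` is
almost linear modulo `m`: `ĥ(x1 + x2) ≡ ĥ(x1) + ĥ(x2) + κ (mod m)` for some
`κ ∈ {0, 1}`. -/
theorem stmt_6 (u m : ℕ) (hu : 0 < u) (hm : 0 < m) (a x1 x2 : ℕ) :
    ∃ κ ≤ 1, Nat.ModEq m ((a * (x1 + x2)) % (u * m) / u)
      ((a * x1) % (u * m) / u + (a * x2) % (u * m) / u + κ) :=
  stmt_6_general u m a x1 x2
end
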